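/- arXiv:2210.03391 — 2 statements merged into one kernel-verified Lean document; each statement's English description precedes it below -/
import Mathlib

section
/- The cubic polynomial 4λ³ − 2368λ² − 188λ + 1 has three real roots λ₁, λ₂, λ₃ satisfying 0 < λ₁ < 0.006, −0.085 < λ₂ < −0.084, and 592 < λ₃ < 593; in particular |λ₁| < |λ₂| < |λ₃|. -/
open Set

theorem exists_zero_Ioo_of_mul_neg {f : ℝ → ℝ} {a b : ℝ} (hab : a ≤ b)
    (hf : ContinuousOn f (Icc a b)) (hsign : f a * f b < 0) : ∃ x ∈ Ioo a b, f x = 0 := by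
  rcases mul_neg_iff.mp hsign with ⟨ha, hb⟩ | ⟨ha, hb⟩
  · exact intermediate_value_Ioo' hab hf ⟨hb, ha⟩
  · exact intermediate_value_Ioo hab hf ⟨ha, hb⟩

theorem char_poly_roots :
    ∃ l1 l2 l3 : ℝ,
      (4*l1^3 - 2368*l1^2 - 188*l1 + 1 = 0) ∧
      (4*l2^3 - 2368*l2^2 - 188*l2 + 1 = 0) ∧
      (4*l3^3 - 2368*l3^2 - 188*l3 + 1 = 0) ∧
      (0 < l1 ∧ l1 < 0.006) ∧
      (-0.085 < l2 ∧ l2 < -0.084) ∧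
      (592 < l3 ∧ l3 < 593) ∧
      |l1| < |l2| ∧ |l2| < |l3| := by
  set f : ℝ → ℝ := fun x => 4*x^3 - 2368*x^2 - 188*x + 1
  have hf (a b : ℝ) : ContinuousOn f (Icc a b) := by fun_prop
  obtain ⟨l1, ⟨hl1a, hl1b⟩, h1⟩ := exists_zero_Ioo_of_mul_neg (by norm_num) (hf 0 0.006)
    (by norm_num [f])
  obtain ⟨l2, ⟨hl2a, hl2b⟩, h2⟩ := exists_zero_Ioo_of_mul_neg (by norm_num) (hf (-0.085) (-0.084))
    (by norm_num [f])
  obtain ⟨l3, ⟨hl3a, hl3b⟩, h3⟩ := exists_zero_Ioo_of_mul_neg (by norm_num) (hf 592 593)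
    (by norm_num [f])
  refine ⟨l1, l2, l3, h1, h2, h3, ⟨hl1a, hl1b⟩, ⟨hl2a, hl2b⟩, ⟨hl3a, hl3b⟩, ?_, ?_⟩
  · rw [abs_of_pos hl1a, abs_of_neg (by linarith)]
    linarith
  · rw [abs_of_neg (by linarith : l2 < 0), abs_of_pos (by linarith : (0:ℝ) < l3)]
    linarith
end

section
/- The 28 linear forms h₁,...,h₂₈ of the paper, expressed in the symmetric parameters s₀,...,s₇, are exactly the multiset {s_i+s_j : 1 ≤ i < j ≤ 7} ∪ {s₀−s_i : 1 ≤ i ≤ 7}. For example: a₁ = s₁+s₂, a₂ = s₀−s₂, a₁+a₂−a₄ = s₁+s₃, a₄+a₅+a₇+a₈−a₂−a₃−a₆ = s₄+s₇. -/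
/-- The 28 linear forms h₁,…,h₂₈ in the parameters (a₁,…,a₈) (0-indexed). -/
def hforms : List ((Fin 8 → ℚ) → ℚ) :=
  [fun a => a 0, fun a => a 1, fun a => a 2, fun a => a 3,
   fun a => a 4, fun a => a 5, fun a => a 6, fun a => a 7,
   fun a => a 0 + a 1 - a 3, fun a => a 0 + a 4 - a 2,
   fun a => a 0 + a 7 - a 2, fun a => a 1 + a 2 - a 4,
   fun a => a 1 + a 2 - a 7, fun a => a 2 + a 5 - a 7,
   fun a => a 2 + a 3 - a 0, fun a => a 3 + a 4 - a 1,
   fun a => a 3 + a 7 - a 5, fun a => a 3 + a 7 - a 1,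
   fun a => a 4 + a 5 - a 7, fun a => a 6 + a 7 - a 5,
   fun a => a 0 + a 1 + a 5 - a 3 - a 7,
   fun a => a 0 + a 6 + a 7 - a 2 - a 5,
   fun a => a 1 + a 2 + a 5 - a 3 - a 7,
   fun a => a 1 + a 2 + a 5 - a 6 - a 7,
   fun a => a 3 + a 4 + a 7 - a 1 - a 2,
   fun a => a 3 + a 6 + a 7 - a 1 - a 5,
   fun a => a 3 + a 6 + 2*a 7 - a 1 - a 2 - a 5,
   fun a => a 3 + a 4 + a 6 + a 7 - a 1 - a 2 - a 5]

/-- The symmetric parametrisation `s ↦ a`. -/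
def T (s : Fin 8 → ℚ) : Fin 8 → ℚ :=
  ![s 1 + s 2, s 0 - s 2, s 2 + s 3, s 0 - s 3, s 3 + s 4, s 5 + s 6,
    s 6 + s 7, s 3 + s 5]

/-- Auxiliary encoding: value of an index pair. -/
def gval (s : Fin 8 → ℚ) (p : Fin 8 × Fin 8) : ℚ :=
  if p.1 = 0 then s 0 - s p.2 else s p.1 + s p.2

/-- Index pairs of the 28 forms, in order. -/
def plist : List (Fin 8 × Fin 8) :=
  [(1,2),(0,2),(2,3),(0,3),(3,4),(5,6),(6,7),(3,5),
   (1,3),(1,4),(1,5),(0,4),(0,5),(2,6),(0,1),(2,4),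
   (0,6),(2,5),(4,6),(3,7),(1,6),(1,7),(3,6),(0,7),
   (4,5),(2,7),(5,7),(4,7)]

theorem hforms_in_symmetric_parameters (s : Fin 8 → ℚ) :
    ((hforms.map (fun f => f (T s)) : List ℚ) : Multiset ℚ)
      = ((Finset.filter (fun p : Fin 8 × Fin 8 => 0 < p.1 ∧ p.1 < p.2)
            Finset.univ).val.map (fun p => s p.1 + s p.2))
        + ((Finset.filter (fun i : Fin 8 => 0 < i) Finset.univ).val.map
            (fun i => s 0 - s i)) ∧
    T s 0 = s 1 + s 2 ∧ T s 1 = s 0 - s 2 ∧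
    T s 0 + T s 1 - T s 3 = s 1 + s 3 ∧
    T s 3 + T s 4 + T s 6 + T s 7 - T s 1 - T s 2 - T s 5 = s 4 + s 7 := by
  have e0 : T s 0 = s 1 + s 2 := rfl
  have e1 : T s 1 = s 0 - s 2 := rfl
  have e2 : T s 2 = s 2 + s 3 := rfl
  have e3 : T s 3 = s 0 - s 3 := rfl
  have e4 : T s 4 = s 3 + s 4 := rfl
  have e5 : T s 5 = s 5 + s 6 := rfl
  have e6 : T s 6 = s 6 + s 7 := rfl
  have e7 : T s 7 = s 3 + s 5 := rfl
  refine ⟨?_, e0, e1, by rw [e0, e1, e3]; ring, by rw [e3, e4, e6, e7, e1, e2, e5]; ring⟩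
  have h1 : hforms.map (fun f => f (T s)) = plist.map (gval s) := by
    have hr : plist.map (gval s) =
        [s 1 + s 2, s 0 - s 2, s 2 + s 3, s 0 - s 3, s 3 + s 4, s 5 + s 6,
         s 6 + s 7, s 3 + s 5, s 1 + s 3, s 1 + s 4, s 1 + s 5, s 0 - s 4,
         s 0 - s 5, s 2 + s 6, s 0 - s 1, s 2 + s 4, s 0 - s 6, s 2 + s 5,
         s 4 + s 6, s 3 + s 7, s 1 + s 6, s 1 + s 7, s 3 + s 6, s 0 - s 7,
         s 4 + s 5, s 2 + s 7, s 5 + s 7, s 4 + s 7] := rfl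
    rw [hr]
    simp only [hforms, List.map, e0, e1, e2, e3, e4, e5, e6, e7, List.cons.injEq, and_true, true_and]
    and_intros <;> ring_nf
  have h2 : (Finset.filter (fun p : Fin 8 × Fin 8 => 0 < p.1 ∧ p.1 < p.2)
        Finset.univ).val
      + (Finset.filter (fun i : Fin 8 => 0 < i) Finset.univ).val.map
          (fun i => ((0 : Fin 8), i)) = (plist : Multiset (Fin 8 × Fin 8)) := by
    decide
  have h3 : ((Finset.filter (fun p : Fin 8 × Fin 8 => 0 < p.1 ∧ p.1 < p.2)
        Finset.univ).val.map (fun p => s p.1 + s p.2))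
      = (Finset.filter (fun p : Fin 8 × Fin 8 => 0 < p.1 ∧ p.1 < p.2)
        Finset.univ).val.map (gval s) := by
    refine Multiset.map_congr rfl ?_
    intro p hp
    have hp' := (Finset.mem_filter.mp (Finset.mem_val.mp hp)).2.1
    simp [gval, hp'.ne']
  have h4 : ((Finset.filter (fun i : Fin 8 => 0 < i) Finset.univ).val.map
        (fun i => s 0 - s i))
      = ((Finset.filter (fun i : Fin 8 => 0 < i) Finset.univ).val.map
          (fun i => ((0 : Fin 8), i))).map (gval s) := by
    rw [Multiset.map_map]
    rfl
  rw [h1, h3, h4, ← Multiset.map_add, h2]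
  rfl
end
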